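/- arXiv:1706.03896 — 3 statements merged into one kernel-verified Lean document; each statement's English description precedes it below -/
import Mathlib

section
/- Let L(t) be a curve of d-dimensional subspaces of R^D given by L(t) = span(v_1 cos(tθ_1) + u_1 sin(tθ_1), ..., v_k cos(tθ_k) + u_k sin(tθ_k), v_{k+1}, ..., v_d), where {v_1,...,v_d, u_1,...,u_k} is an orthonormal set in R^D. Then for any x ∈ R^D with dist(x, L(t)) > 0, the derivative of t ↦ dist(x, L(t)) satisfies |d/dt dist(x, L(t))| ≤ (Σ_{j=1}^k θ_j^2)^{1/2} · ‖x‖. -/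
/-- Distance from a point to a subspace: norm of the residual after orthogonal projection
(`dist(x,L) = ‖Q_L x‖`). -/
noncomputable def distL {D : ℕ} (x : EuclideanSpace ℝ (Fin D))
    (L : Submodule ℝ (EuclideanSpace ℝ (Fin D))) : ℝ :=
  ‖x - (L.orthogonalProjection x : EuclideanSpace ℝ (Fin D))‖

/-- The curve of subspaces
`L(t) = span(v₁ cos(tθ₁) + u₁ sin(tθ₁), …, v_k cos(tθ_k) + u_k sin(tθ_k), v_{k+1}, …, v_d)`. -/
noncomputable def rotCurve {D : ℕ} (d k : ℕ) (v : Fin d → EuclideanSpace ℝ (Fin D))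
    (u : Fin k → EuclideanSpace ℝ (Fin D)) (θ : Fin k → ℝ) (t : ℝ) :
    Submodule ℝ (EuclideanSpace ℝ (Fin D)) :=
  Submodule.span ℝ (Set.range fun j : Fin d =>
    if h : (j : ℕ) < k then
      Real.cos (t * θ ⟨j, h⟩) • v j + Real.sin (t * θ ⟨j, h⟩) • u ⟨j, h⟩
    else v j)

open scoped RealInnerProductSpace

lemma sum_dite_lt {d k : ℕ} (hk : k ≤ d) (f : Fin k → ℝ) :
    ∑ j : Fin d, (if h : (j : ℕ) < k then f ⟨j, h⟩ else 0) = ∑ i : Fin k, f i := by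
  classical
  have hsub : (Finset.univ.map (Fin.castLEEmb hk)) ⊆ Finset.univ := Finset.subset_univ _
  have hzero : ∀ j ∈ Finset.univ, j ∉ Finset.univ.map (Fin.castLEEmb hk) →
      (if h : (j : ℕ) < k then f ⟨j, h⟩ else 0) = 0 := by
    intro j _ hj
    rw [dif_neg]
    intro h
    exact hj (Finset.mem_map.mpr ⟨⟨j, h⟩, Finset.mem_univ _, rfl⟩)
  rw [← Finset.sum_subset hsub hzero, Finset.sum_map]
  apply Finset.sum_congr rfl
  intro i _
  simp [Fin.castLEEmb, Fin.castLE]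

lemma distL_eq_sqrt {D n : ℕ} (w : Fin n → EuclideanSpace ℝ (Fin D)) (hw : Orthonormal ℝ w)
    (x : EuclideanSpace ℝ (Fin D)) :
    distL x (Submodule.span ℝ (Set.range w)) =
      Real.sqrt (‖x‖ ^ 2 - ∑ j, ⟪w j, x⟫ ^ 2) := by
  set K := Submodule.span ℝ (Set.range w) with hK
  haveI : FiniteDimensional ℝ K := FiniteDimensional.span_of_finite ℝ (Set.finite_range w)
  set y : EuclideanSpace ℝ (Fin D) := ∑ j, ⟪w j, x⟫ • w j with hy
  have hproj : (K.orthogonalProjection x : EuclideanSpace ℝ (Fin D)) = y := by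
    show K.starProjection x = y
    apply Submodule.eq_starProjection_of_mem_of_inner_eq_zero
    · exact Submodule.sum_mem _ fun j _ =>
        Submodule.smul_mem _ _ (Submodule.subset_span ⟨j, rfl⟩)
    · intro z hz
      induction hz using Submodule.span_induction with
      | mem z hz =>
        obtain ⟨i, rfl⟩ := hz
        rw [inner_sub_left, hy, hw.inner_left_fintype, conj_trivial, real_inner_comm, sub_self]
      | zero => simp
      | add a b _ _ ha hb => rw [inner_add_right, ha, hb, add_zero]
      | smul r a _ ha => rw [inner_smul_right, ha, mul_zero]
  have hyx : ⟪x, y⟫ = ∑ j, ⟪w j, x⟫ ^ 2 := by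
    rw [hy, inner_sum]
    apply Finset.sum_congr rfl
    intro j _
    rw [real_inner_smul_right, real_inner_comm, sq]
  have hyy : ‖y‖ ^ 2 = ∑ j, ⟪w j, x⟫ ^ 2 := by
    rw [← real_inner_self_eq_norm_sq, hy, hw.inner_sum]
    simp [sq]
  have hexp : ‖x - y‖ ^ 2 = ‖x‖ ^ 2 - ∑ j, ⟪w j, x⟫ ^ 2 := by
    rw [@norm_sub_sq_real, hyx, hyy]; ring
  rw [distL, hproj, ← Real.sqrt_sq (norm_nonneg (x - y)), hexp]

set_option maxHeartbeats 1600000 in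
/-- for the curve `L(t)` above (with `{v₁,…,v_d,u₁,…,u_k}` orthonormal,
`θ_j ≥ 0`), at any `t` where `dist(x,L(t)) > 0`, the derivative of `t ↦ dist(x,L(t))`
satisfies `|d/dt dist(x,L(t))| ≤ (Σ_j θ_j²)^{1/2} ‖x‖`. -/
theorem stmt0 {D d k : ℕ} (hk : k ≤ d)
    (v : Fin d → EuclideanSpace ℝ (Fin D)) (u : Fin k → EuclideanSpace ℝ (Fin D))
    (θ : Fin k → ℝ) (hθ : ∀ j, 0 ≤ θ j)
    (horth : Orthonormal ℝ (Sum.elim v u))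
    (x : EuclideanSpace ℝ (Fin D)) (t : ℝ)
    (hdist : 0 < distL x (rotCurve d k v u θ t))
    (f' : ℝ) (hderiv : HasDerivAt (fun s => distL x (rotCurve d k v u θ s)) f' t) :
    |f'| ≤ Real.sqrt (∑ j, θ j ^ 2) * ‖x‖ := by
  classical
  -- base inner product facts
  have hb := orthonormal_iff_ite.mp horth
  have hvv : ∀ i j : Fin d, ⟪v i, v j⟫ = if i = j then (1:ℝ) else 0 := by
    intro i j; simpa using hb (Sum.inl i) (Sum.inl j)
  have hvu : ∀ (i : Fin d) (j : Fin k), ⟪v i, u j⟫ = (0:ℝ) := by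
    intro i j; simpa using hb (Sum.inl i) (Sum.inr j)
  have huv : ∀ (i : Fin k) (j : Fin d), ⟪u i, v j⟫ = (0:ℝ) := by
    intro i j; rw [real_inner_comm]; exact hvu j i
  have huu : ∀ i j : Fin k, ⟪u i, u j⟫ = if i = j then (1:ℝ) else 0 := by
    intro i j; simpa using hb (Sum.inr i) (Sum.inr j)
  -- the moving frame
  set e : ℝ → Fin d → EuclideanSpace ℝ (Fin D) := fun s j =>
    if h : (j : ℕ) < k then
      Real.cos (s * θ ⟨j, h⟩) • v j + Real.sin (s * θ ⟨j, h⟩) • u ⟨j, h⟩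
    else v j with he
  have hL : ∀ s, rotCurve d k v u θ s = Submodule.span ℝ (Set.range (e s)) := fun s => rfl
  have horthe : ∀ s, Orthonormal ℝ (e s) := by
    intro s
    rw [orthonormal_iff_ite]
    intro i j
    by_cases hij : i = j
    · subst hij
      rw [if_pos rfl]
      by_cases hi : (i : ℕ) < k
      · simp only [he, dif_pos hi, inner_add_left, inner_add_right, real_inner_smul_left,
          real_inner_smul_right, hvv, hvu, huv, huu, if_pos rfl, if_true, mul_one, mul_zero,
          add_zero, zero_add]
        nlinarith [Real.sin_sq_add_cos_sq (s * θ ⟨i, hi⟩)]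
      · simp only [he, dif_neg hi]; rw [hvv, if_pos rfl]
    · rw [if_neg hij]
      have hmk : ∀ (hi' : (i:ℕ) < k) (hj' : (j:ℕ) < k), (⟨(i:ℕ), hi'⟩ : Fin k) ≠ ⟨(j:ℕ), hj'⟩ := by
        intro hi' hj' hEq
        have hval : (i : ℕ) = (j : ℕ) := by simpa using hEq
        exact hij (Fin.ext hval)
      have hvvne : ⟪v i, v j⟫ = (0:ℝ) := by rw [hvv, if_neg hij]
      have huune : ∀ (hi' : (i:ℕ) < k) (hj' : (j:ℕ) < k),
          ⟪u ⟨(i:ℕ), hi'⟩, u ⟨(j:ℕ), hj'⟩⟫ = (0:ℝ) := by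
        intro hi' hj'; rw [huu, if_neg (hmk hi' hj')]
      by_cases hi : (i : ℕ) < k <;> by_cases hj : (j : ℕ) < k
      · simp only [he, dif_pos hi, dif_pos hj, inner_add_left, inner_add_right,
          real_inner_smul_left, real_inner_smul_right, hvvne, huune hi hj, hvu, huv,
          mul_zero, add_zero, zero_add]
      · simp only [he, dif_pos hi, dif_neg hj, inner_add_left, real_inner_smul_left,
          hvvne, huv, mul_zero, add_zero, zero_add]
      · simp only [he, dif_neg hi, dif_pos hj, inner_add_right, real_inner_smul_right,
          hvvne, hvu, mul_zero, add_zero, zero_add]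
      · simp only [he, dif_neg hi, dif_neg hj, hvvne]
  -- coefficient functions
  set a : Fin d → ℝ → ℝ := fun j s =>
    if h : (j : ℕ) < k then
      Real.cos (s * θ ⟨j, h⟩) * ⟪v j, x⟫ + Real.sin (s * θ ⟨j, h⟩) * ⟪u ⟨j, h⟩, x⟫
    else ⟪v j, x⟫ with ha_def
  have hea : ∀ s (j : Fin d), ⟪e s j, x⟫ = a j s := by
    intro s j
    by_cases h : (j : ℕ) < k
    · simp only [he, ha_def, dif_pos h, inner_add_left, real_inner_smul_left]
    · simp only [he, ha_def, dif_neg h]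
  set g : ℝ → ℝ := fun s => ∑ j, (a j s) ^ 2 with hg_def
  have hF : ∀ s, distL x (rotCurve d k v u θ s) = Real.sqrt (‖x‖ ^ 2 - g s) := by
    intro s
    rw [hL s, distL_eq_sqrt (e s) (horthe s) x]
    congr 2
    exact Finset.sum_congr rfl fun j _ => by rw [hea]
  have hy : 0 < ‖x‖ ^ 2 - g t := Real.sqrt_pos.mp (by rw [← hF t]; exact hdist)
  -- derivative computation
  set c : Fin k → ℝ := fun i =>
    -Real.sin (t * θ i) * ⟪v (Fin.castLE hk i), x⟫ + Real.cos (t * θ i) * ⟪u i, x⟫ with hc_def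
  set a' : Fin d → ℝ := fun j => if h : (j : ℕ) < k then θ ⟨j, h⟩ * c ⟨j, h⟩ else 0 with ha'_def
  have hda : ∀ j, HasDerivAt (fun s => a j s) (a' j) t := by
    intro j
    by_cases h : (j : ℕ) < k
    · simp only [ha_def, ha'_def, dif_pos h]
      have h1 : HasDerivAt (fun s : ℝ => s * θ ⟨(j : ℕ), h⟩) (θ ⟨(j : ℕ), h⟩) t :=
        hasDerivAt_mul_const _
      have h2 := (h1.cos.mul_const ⟪v j, x⟫).fun_add (h1.sin.mul_const ⟪u ⟨(j : ℕ), h⟩, x⟫)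
      refine h2.congr_deriv ?_
      have hcast : Fin.castLE hk (⟨(j : ℕ), h⟩ : Fin k) = j := rfl
      rw [show c ⟨(j : ℕ), h⟩ = -Real.sin (t * θ ⟨(j : ℕ), h⟩) * ⟪v (Fin.castLE hk ⟨(j : ℕ), h⟩), x⟫
        + Real.cos (t * θ ⟨(j : ℕ), h⟩) * ⟪u ⟨(j : ℕ), h⟩, x⟫ from rfl, hcast]
      ring
    · simp only [ha_def, ha'_def, dif_neg h]
      exact hasDerivAt_const t _
  have hdg : HasDerivAt g (∑ j, 2 * a j t * a' j) t := by
    have h1 : HasDerivAt (fun s => ∑ j, (a j s) ^ 2)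
        (∑ j, (2 : ℕ) * a j t ^ (2 - 1) * a' j) t :=
      HasDerivAt.fun_sum fun j _ => (hda j).pow 2
    convert h1 using 1
    exact Finset.sum_congr rfl fun j _ => by norm_num
  have hsqrt : HasDerivAt (fun s => Real.sqrt (‖x‖ ^ 2 - g s))
      (1 / (2 * Real.sqrt (‖x‖ ^ 2 - g t)) * (0 - ∑ j, 2 * a j t * a' j)) t := by
    have hsub : HasDerivAt (fun s => ‖x‖ ^ 2 - g s) (0 - ∑ j, 2 * a j t * a' j) t :=
      (hasDerivAt_const t _).sub hdg
    exact (Real.hasDerivAt_sqrt hy.ne').comp t hsub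
  have hfeq : f' = 1 / (2 * Real.sqrt (‖x‖ ^ 2 - g t)) * (0 - ∑ j, 2 * a j t * a' j) := by
    have heq : (fun s => distL x (rotCurve d k v u θ s))
        = fun s => Real.sqrt (‖x‖ ^ 2 - g s) := funext hF
    rw [heq] at hderiv
    exact hderiv.unique hsqrt
  -- combined orthonormal family
  set W : Fin d ⊕ Fin k → EuclideanSpace ℝ (Fin D) := Sum.elim (e t)
    (fun i => (-Real.sin (t * θ i)) • v (Fin.castLE hk i) + Real.cos (t * θ i) • u i)
    with hW_def
  have hvv0 : ∀ i j : Fin d, (i : ℕ) ≠ (j : ℕ) → ⟪v i, v j⟫ = (0:ℝ) := by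
    intro i j hij; rw [hvv, if_neg (fun hEq => hij (congrArg Fin.val hEq))]
  have huu0 : ∀ i j : Fin k, (i : ℕ) ≠ (j : ℕ) → ⟪u i, u j⟫ = (0:ℝ) := by
    intro i j hij; rw [huu, if_neg (fun hEq => hij (congrArg Fin.val hEq))]
  have hcross : ∀ (j : Fin d) (i : Fin k), ⟪e t j, W (Sum.inr i)⟫ = 0 := by
    intro j i
    by_cases hji : (j : ℕ) = (i : ℕ)
    · have hjk : (j : ℕ) < k := hji ▸ i.isLt
      have hmk : (⟨(j : ℕ), hjk⟩ : Fin k) = i := Fin.ext hji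
      have hcast : Fin.castLE hk i = j := Fin.ext hji.symm
      simp only [he, hW_def, Sum.elim_inr, dif_pos hjk, hmk, hcast, inner_add_left,
        inner_add_right, real_inner_smul_left, real_inner_smul_right, hvv, hvu, huv, huu,
        if_pos rfl, if_true, mul_one, mul_zero, add_zero, zero_add]
      ring
    · have h1 : ⟪v j, v (Fin.castLE hk i)⟫ = (0:ℝ) := hvv0 _ _ (by simpa using hji)
      by_cases hj : (j : ℕ) < k
      · have h2 : ⟪u ⟨(j : ℕ), hj⟩, u i⟫ = (0:ℝ) := huu0 _ _ (by simpa using hji)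
        simp only [he, hW_def, Sum.elim_inr, dif_pos hj, inner_add_left, inner_add_right,
          real_inner_smul_left, real_inner_smul_right, h1, h2, hvu, huv,
          mul_zero, add_zero, zero_add]
      · simp only [he, hW_def, Sum.elim_inr, dif_neg hj, inner_add_right,
          real_inner_smul_right, h1, hvu, mul_zero, add_zero, zero_add]
  have hWo : Orthonormal ℝ W := by
    rw [orthonormal_iff_ite]
    have hbe := orthonormal_iff_ite.mp (horthe t)
    rintro (j | i) (j' | i')
    · simpa [hW_def] using hbe j j'
    · rw [if_neg (by simp)]
      exact hcross j i'
    · rw [if_neg (by simp), real_inner_comm]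
      exact hcross j' i
    · by_cases hii : i = i'
      · subst hii
        rw [if_pos rfl]
        simp only [hW_def, Sum.elim_inr, inner_add_left, inner_add_right,
          real_inner_smul_left, real_inner_smul_right, hvv, hvu, huv, huu, if_pos rfl,
          if_true, mul_one, mul_zero, add_zero, zero_add]
        nlinarith [Real.sin_sq_add_cos_sq (t * θ i)]
      · rw [if_neg (by simp [hii])]
        have hii' : (i : ℕ) ≠ (i' : ℕ) := fun hEq => hii (Fin.ext hEq)
        have h1 : ⟪v (Fin.castLE hk i), v (Fin.castLE hk i')⟫ = (0:ℝ) := hvv0 _ _ (by simpa using hii')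
        have h2 : ⟪u i, u i'⟫ = (0:ℝ) := huu0 _ _ hii'
        simp only [hW_def, Sum.elim_inr, inner_add_left, inner_add_right,
          real_inner_smul_left, real_inner_smul_right, h1, h2, hvu, huv,
          mul_zero, add_zero, zero_add]
  -- Bessel inequality for the combined family
  have hWc : ∀ i : Fin k, ⟪W (Sum.inr i), x⟫ = c i := by
    intro i
    simp only [hW_def, Sum.elim_inr, hc_def, inner_add_left, real_inner_smul_left]
  have hBessel : g t + ∑ i, c i ^ 2 ≤ ‖x‖ ^ 2 := by
    have hb2 := hWo.sum_inner_products_le (s := Finset.univ) x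
    rw [Fintype.sum_sum_type] at hb2
    simp only [Real.norm_eq_abs, sq_abs] at hb2
    have h1 : ∀ j : Fin d, ⟪W (Sum.inl j), x⟫ = a j t := fun j => hea t j
    calc g t + ∑ i, c i ^ 2
        = (∑ j : Fin d, ⟪W (Sum.inl j), x⟫ ^ 2) + ∑ i : Fin k, ⟪W (Sum.inr i), x⟫ ^ 2 := by
          rw [hg_def]
          congr 1
          · exact (Finset.sum_congr rfl fun j _ => by rw [h1 j]).symm
          · exact (Finset.sum_congr rfl fun i _ => by rw [hWc i]).symm
      _ ≤ ‖x‖ ^ 2 := hb2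
  have hc2 : ∑ i, c i ^ 2 ≤ ‖x‖ ^ 2 - g t := by linarith
  -- bound |a j t| ≤ ‖x‖
  have haN : ∀ j : Fin d, a j t ^ 2 ≤ ‖x‖ ^ 2 := by
    intro j
    rw [← hea t j, ← sq_abs]
    have h1 : |⟪e t j, x⟫| ≤ ‖e t j‖ * ‖x‖ := abs_real_inner_le_norm _ _
    rw [(horthe t).1 j, one_mul] at h1
    exact pow_le_pow_left₀ (abs_nonneg _) h1 2
  -- the key Cauchy–Schwarz bound
  set S := Real.sqrt (‖x‖ ^ 2 - g t) with hS_def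
  have hSpos : 0 < S := Real.sqrt_pos.mpr hy
  have key : |∑ j, a j t * a' j| ≤ Real.sqrt (∑ i, θ i ^ 2) * ‖x‖ * S := by
    set P : Fin d → ℝ := fun j => if h : (j : ℕ) < k then θ ⟨j, h⟩ * a j t else 0 with hP_def
    set Q : Fin d → ℝ := fun j => if h : (j : ℕ) < k then c ⟨j, h⟩ else 0 with hQ_def
    have hsplit : ∀ j, a j t * a' j = P j * Q j := by
      intro j
      by_cases h : (j : ℕ) < k
      · simp only [ha'_def, hP_def, hQ_def, dif_pos h]; ring
      · simp only [ha'_def, hP_def, hQ_def, dif_neg h, mul_zero, zero_mul]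
    have hP2 : ∑ j, P j ^ 2 ≤ (∑ i, θ i ^ 2) * ‖x‖ ^ 2 := by
      have h1 : ∀ j : Fin d, P j ^ 2 ≤
          (if h : (j : ℕ) < k then θ ⟨j, h⟩ ^ 2 * ‖x‖ ^ 2 else 0) := by
        intro j
        by_cases h : (j : ℕ) < k
        · simp only [hP_def, dif_pos h, mul_pow]
          exact mul_le_mul_of_nonneg_left (haN j) (sq_nonneg _)
        · simp [hP_def, dif_neg h]
      calc ∑ j, P j ^ 2
          ≤ ∑ j : Fin d, (if h : (j : ℕ) < k then θ ⟨j, h⟩ ^ 2 * ‖x‖ ^ 2 else 0) :=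
            Finset.sum_le_sum fun j _ => h1 j
        _ = ∑ i : Fin k, θ i ^ 2 * ‖x‖ ^ 2 := sum_dite_lt hk (fun i => θ i ^ 2 * ‖x‖ ^ 2)
        _ = (∑ i, θ i ^ 2) * ‖x‖ ^ 2 := by rw [Finset.sum_mul]
    have hQ2 : ∑ j, Q j ^ 2 ≤ ‖x‖ ^ 2 - g t := by
      have h0 : ∀ j : Fin d, Q j ^ 2 = (if h : (j : ℕ) < k then c ⟨j, h⟩ ^ 2 else 0) := by
        intro j
        by_cases h : (j : ℕ) < k
        · simp only [hQ_def, dif_pos h]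
        · simp only [hQ_def, dif_neg h]
          norm_num
      have h1 : ∑ j, Q j ^ 2 = ∑ i, c i ^ 2 := by
        rw [Finset.sum_congr rfl fun j _ => h0 j, sum_dite_lt hk (fun i => c i ^ 2)]
      rw [h1]; exact hc2
    have hcs : |∑ j, P j * Q j| ≤ Real.sqrt (∑ j, P j ^ 2) * Real.sqrt (∑ j, Q j ^ 2) := by
      rw [abs_le]
      constructor
      · have h2 := Real.sum_mul_le_sqrt_mul_sqrt Finset.univ (fun j => -P j) Q
        simp only [neg_mul, Finset.sum_neg_distrib, neg_sq] at h2
        linarith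
      · exact Real.sum_mul_le_sqrt_mul_sqrt _ _ _
    have hsq1 : Real.sqrt (∑ j, P j ^ 2) ≤ Real.sqrt (∑ i, θ i ^ 2) * ‖x‖ := by
      calc Real.sqrt (∑ j, P j ^ 2) ≤ Real.sqrt ((∑ i, θ i ^ 2) * ‖x‖ ^ 2) :=
            Real.sqrt_le_sqrt hP2
        _ = Real.sqrt (∑ i, θ i ^ 2) * ‖x‖ := by
            rw [Real.sqrt_mul (Finset.sum_nonneg fun i _ => sq_nonneg _),
              Real.sqrt_sq (norm_nonneg _)]
    have hsq2 : Real.sqrt (∑ j, Q j ^ 2) ≤ S := Real.sqrt_le_sqrt hQ2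
    calc |∑ j, a j t * a' j| = |∑ j, P j * Q j| := by
          rw [Finset.sum_congr rfl fun j _ => hsplit j]
      _ ≤ Real.sqrt (∑ j, P j ^ 2) * Real.sqrt (∑ j, Q j ^ 2) := hcs
      _ ≤ Real.sqrt (∑ i, θ i ^ 2) * ‖x‖ * S := by
          apply mul_le_mul hsq1 hsq2 (Real.sqrt_nonneg _)
          positivity
  -- conclude
  have h2sum : ∑ j, 2 * a j t * a' j = 2 * ∑ j, a j t * a' j := by
    rw [Finset.mul_sum]
    exact Finset.sum_congr rfl fun j _ => by ring
  rw [hfeq, h2sum]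
  rw [zero_sub, abs_mul, abs_neg, abs_mul, abs_of_pos (by positivity : (0:ℝ) < 1 / (2 * S)),
    abs_of_pos (by norm_num : (0:ℝ) < 2)]
  calc 1 / (2 * S) * (2 * |∑ j, a j t * a' j|)
      ≤ 1 / (2 * S) * (2 * (Real.sqrt (∑ i, θ i ^ 2) * ‖x‖ * S)) := by
        apply mul_le_mul_of_nonneg_left _ (by positivity)
        exact mul_le_mul_of_nonneg_left key (by norm_num)
    _ = Real.sqrt (∑ i, θ i ^ 2) * ‖x‖ := by
        field_simp
end

section
/- Let Σ_in be a D × D positive semidefinite matrix of rank d with eigenvalues λ_1 ≥ ... ≥ λ_d > 0, and let x_1, ..., x_N be nonzero vectors in the range of Σ_in. Write X for the matrix with columns x_i and X̃ for its spherization. Then σ_d(X̃) ≥ (λ_d(Σ_in^{1/2})/λ_1(Σ_in^{1/2})) · σ_d(Ỹ), where Ỹ is the spherization of Y = Σ_in^{−1/2} X (pseudoinverse square root on the range). -/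
open Matrix

/-- `d`-th largest singular value of a matrix, via the Courant–Fischer (max–min)
characterization. -/
noncomputable def sigmaSV {m n : ℕ} (d : ℕ) (A : Matrix (Fin m) (Fin n) ℝ) : ℝ :=
  ⨆ W : {W : Submodule ℝ (EuclideanSpace ℝ (Fin n)) // Module.finrank ℝ W = d},
    ⨅ v : {v : EuclideanSpace ℝ (Fin n) // v ∈ W.1 ∧ ‖v‖ = 1},
      ‖Matrix.toEuclideanLin A v.1‖

/-- Euclidean norm of a coordinate vector. -/
noncomputable def enorm2 {n : ℕ} (v : Fin n → ℝ) : ℝ := Real.sqrt (∑ i, v i ^ 2)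

/- ### Auxiliary lemmas -/

lemma enorm2_eq_norm {n : ℕ} (v : EuclideanSpace ℝ (Fin n)) :
    enorm2 (fun i => v i) = ‖v‖ := by
  rw [EuclideanSpace.norm_eq, enorm2]; simp [Real.norm_eq_abs, sq_abs]

lemma enorm2_nonneg {n : ℕ} (v : Fin n → ℝ) : 0 ≤ enorm2 v := Real.sqrt_nonneg _

lemma enorm2_pos {n : ℕ} {v : Fin n → ℝ} (hv : v ≠ 0) : 0 < enorm2 v := by
  apply Real.sqrt_pos.2
  obtain ⟨i, hi⟩ := Function.ne_iff.1 hv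
  exact Finset.sum_pos' (fun j _ => sq_nonneg _)
    ⟨i, Finset.mem_univ _, by exact pow_pos (abs_pos.2 hi) 2 |>.trans_eq (sq_abs _)⟩

lemma enorm2_scale {n : ℕ} {c : Fin n → ℝ} {m : ℝ} (hm : 0 ≤ m)
    (hc : ∀ i, m ≤ c i) (v : Fin n → ℝ) :
    m * enorm2 v ≤ enorm2 (fun i => c i * v i) := by
  rw [enorm2, enorm2, ← Real.sqrt_sq hm, ← Real.sqrt_mul (sq_nonneg m)]
  apply Real.sqrt_le_sqrt
  rw [Finset.mul_sum]
  apply Finset.sum_le_sum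
  intro i _
  have h : m ^ 2 * v i ^ 2 ≤ c i ^ 2 * v i ^ 2 :=
    mul_le_mul_of_nonneg_right (pow_le_pow_left₀ hm (hc i) 2) (sq_nonneg _)
  calc m ^ 2 * v i ^ 2 ≤ c i ^ 2 * v i ^ 2 := h
    _ = (c i * v i) ^ 2 := by ring

/-- Diagonal scaling as a linear equivalence of Euclidean space. -/
noncomputable def diagEquiv {n : ℕ} (c : Fin n → ℝ) (hc : ∀ i, c i ≠ 0) :
    EuclideanSpace ℝ (Fin n) ≃ₗ[ℝ] EuclideanSpace ℝ (Fin n) where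
  toFun v := WithLp.toLp 2 (fun i => c i * v i)
  invFun v := WithLp.toLp 2 (fun i => (c i)⁻¹ * v i)
  map_add' u v := by ext i; simp [PiLp.add_apply]; ring
  map_smul' t v := by ext i; simp [PiLp.smul_apply, smul_eq_mul]; ring
  left_inv v := by
    ext i; show _ * (_ * _) = _
    rw [← mul_assoc]; simp [inv_mul_cancel₀ (hc i), mul_inv_cancel₀ (hc i)]
  right_inv v := by
    ext i; show _ * (_ * _) = _
    rw [← mul_assoc]; simp [inv_mul_cancel₀ (hc i), mul_inv_cancel₀ (hc i)]

lemma toEuclideanLin_coord {m n : ℕ} (A : Matrix (Fin m) (Fin n) ℝ)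
    (v : EuclideanSpace ℝ (Fin n)) (a : Fin m) :
    Matrix.toEuclideanLin A v a = A.mulVec (fun i => v i) a := rfl

lemma norm_toEuclideanLin {m n : ℕ} (A : Matrix (Fin m) (Fin n) ℝ)
    (v : EuclideanSpace ℝ (Fin n)) :
    ‖Matrix.toEuclideanLin A v‖ = enorm2 (A.mulVec (fun i => v i)) := by
  rw [← enorm2_eq_norm]
  congr 1

lemma exists_unit_mem {n : ℕ} {W : Submodule ℝ (EuclideanSpace ℝ (Fin n))}
    (hW : W ≠ ⊥) : ∃ v : EuclideanSpace ℝ (Fin n), v ∈ W ∧ ‖v‖ = 1 := by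
  obtain ⟨v, hvW, hv0⟩ := Submodule.exists_mem_ne_zero_of_ne_bot hW
  refine ⟨‖v‖⁻¹ • v, W.smul_mem _ hvW, ?_⟩
  rw [norm_smul, norm_inv, norm_norm, inv_mul_cancel₀ (norm_ne_zero_iff.2 hv0)]

lemma sigmaSV_nonneg {m n : ℕ} (d : ℕ) (A : Matrix (Fin m) (Fin n) ℝ) :
    0 ≤ sigmaSV d A :=
  Real.iSup_nonneg fun _ => Real.iInf_nonneg fun _ => norm_nonneg _

lemma ne_bot_of_finrank {n d : ℕ} (hd : 0 < d)
    {W : Submodule ℝ (EuclideanSpace ℝ (Fin n))} (hW : Module.finrank ℝ W = d) :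
    W ≠ ⊥ := by
  intro h
  rw [h, finrank_bot] at hW
  omega

lemma iInf_norm_bddBelow {m n : ℕ} (A : Matrix (Fin m) (Fin n) ℝ)
    (W : Submodule ℝ (EuclideanSpace ℝ (Fin n))) :
    BddBelow (Set.range fun v : {v : EuclideanSpace ℝ (Fin n) // v ∈ W ∧ ‖v‖ = 1} =>
      ‖Matrix.toEuclideanLin A v.1‖) := by
  refine ⟨0, ?_⟩
  rintro r ⟨v, rfl⟩
  exact norm_nonneg _

/-- The min over a `d`-dimensional subspace (with `d > 0`) is at most `σ_d`. -/
lemma iInf_le_sigmaSV {m n d : ℕ} (hd : 0 < d) (A : Matrix (Fin m) (Fin n) ℝ)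
    (W : Submodule ℝ (EuclideanSpace ℝ (Fin n))) (hW : Module.finrank ℝ W = d) :
    (⨅ v : {v : EuclideanSpace ℝ (Fin n) // v ∈ W ∧ ‖v‖ = 1},
      ‖Matrix.toEuclideanLin A v.1‖) ≤ sigmaSV d A := by
  have hbdd : BddAbove (Set.range fun
      (V : {W : Submodule ℝ (EuclideanSpace ℝ (Fin n)) // Module.finrank ℝ W = d}) =>
      ⨅ v : {v : EuclideanSpace ℝ (Fin n) // v ∈ V.1 ∧ ‖v‖ = 1},
        ‖Matrix.toEuclideanLin A v.1‖) := by
    refine ⟨‖LinearMap.toContinuousLinearMap (Matrix.toEuclideanLin A)‖, ?_⟩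
    rintro r ⟨V, rfl⟩
    obtain ⟨v, hv1, hv2⟩ := exists_unit_mem (ne_bot_of_finrank hd V.2)
    apply ciInf_le_of_le (iInf_norm_bddBelow A V.1) ⟨v, hv1, hv2⟩
    calc ‖Matrix.toEuclideanLin A v‖
        = ‖LinearMap.toContinuousLinearMap (Matrix.toEuclideanLin A) v‖ := by
          rw [LinearMap.coe_toContinuousLinearMap']
      _ ≤ ‖LinearMap.toContinuousLinearMap (Matrix.toEuclideanLin A)‖ * ‖v‖ :=
          ContinuousLinearMap.le_opNorm _ _
      _ = _ := by rw [hv2, mul_one]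
  exact le_ciSup hbdd (⟨W, hW⟩ :
    {W : Submodule ℝ (EuclideanSpace ℝ (Fin n)) // Module.finrank ℝ W = d})
/-- let `Σ_in = R²` with `R` the positive semidefinite square root, of rank
`d`, whose smallest and largest positive eigenvalues `λ_d(Σ_in^{1/2})`, `λ_1(Σ_in^{1/2})`
satisfy `λd ‖v‖ ≤ ‖R v‖ ≤ λ1 ‖v‖` on the range of `R`. Let the nonzero columns `x_i` of
`X` lie in the range of `Σ_in`, with `x_i = R y_i`, `y_i ∈ range R` (so `Y = Σ_in^{−1/2} X`
via the pseudoinverse square root on the range). Then the spherizations satisfy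
`σ_d(X̃) ≥ (λ_d(Σ_in^{1/2})/λ_1(Σ_in^{1/2})) σ_d(Ỹ)`. -/
theorem stmt15 {D N d : ℕ} (Sin R : Matrix (Fin D) (Fin D) ℝ)
    (hRsym : Rᵀ = R) (hRpsd : ∀ v : Fin D → ℝ, 0 ≤ ∑ a, v a * R.mulVec v a)
    (hsq : R * R = Sin)
    (hrank : Module.finrank ℝ (LinearMap.range (Matrix.toEuclideanLin R)) = d)
    (lam1 lamd : ℝ) (hlamd : 0 < lamd) (hlam1 : lamd ≤ lam1)
    (hlow : ∀ w : Fin D → ℝ, lamd * enorm2 (R.mulVec w) ≤ enorm2 (R.mulVec (R.mulVec w)))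
    (hhigh : ∀ v : Fin D → ℝ, enorm2 (R.mulVec v) ≤ lam1 * enorm2 v)
    (x y : Fin N → Fin D → ℝ)
    (hx0 : ∀ i, x i ≠ 0)
    (hxy : ∀ i, x i = R.mulVec (y i))
    (hyr : ∀ i, ∃ w, y i = R.mulVec w) :
    (lamd / lam1) * sigmaSV d (Matrix.of fun a i => y i a / enorm2 (y i))
      ≤ sigmaSV d (Matrix.of fun a i => x i a / enorm2 (x i)) := by
  set Ymat : Matrix (Fin D) (Fin N) ℝ := Matrix.of fun a i => y i a / enorm2 (y i) with hYmat
  set Xmat : Matrix (Fin D) (Fin N) ℝ := Matrix.of fun a i => x i a / enorm2 (x i) with hXmat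
  have hlam1pos : 0 < lam1 := lt_of_lt_of_le hlamd hlam1
  have hXnn : 0 ≤ sigmaSV d Xmat := sigmaSV_nonneg d Xmat
  -- dispose of the degenerate case d = 0
  rcases Nat.eq_zero_or_pos d with rfl | hd
  · have hY0 : sigmaSV 0 Ymat ≤ 0 := by
      refine Real.iSup_le (fun W => ?_) le_rfl
      have hbot : W.1 = ⊥ := Submodule.finrank_eq_zero.1 W.2
      have hempty : IsEmpty {v : EuclideanSpace ℝ (Fin N) // v ∈ W.1 ∧ ‖v‖ = 1} := by
        constructor; rintro ⟨v, hv, hn⟩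
        rw [hbot, Submodule.mem_bot] at hv
        rw [hv, norm_zero] at hn
        exact one_ne_zero hn.symm
      rw [Real.iInf_of_isEmpty]
    have hY : sigmaSV 0 Ymat = 0 := le_antisymm hY0 (sigmaSV_nonneg 0 Ymat)
    rw [hY, mul_zero]; exact hXnn
  -- basic facts about the vectors
  have hy0 : ∀ i, y i ≠ 0 := by
    intro i h
    exact hx0 i (by rw [hxy i, h, Matrix.mulVec_zero])
  have hxpos : ∀ i, 0 < enorm2 (x i) := fun i => enorm2_pos (hx0 i)
  have hypos : ∀ i, 0 < enorm2 (y i) := fun i => enorm2_pos (hy0 i)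
  -- the scaling coefficients
  set c : Fin N → ℝ := fun i => enorm2 (y i) / enorm2 (x i) with hc
  have hcpos : ∀ i, 0 < c i := fun i => div_pos (hypos i) (hxpos i)
  have hcne : ∀ i, c i ≠ 0 := fun i => (hcpos i).ne'
  have hclow : ∀ i, lam1⁻¹ ≤ c i := by
    intro i
    rw [hc]
    rw [le_div_iff₀ (hxpos i), inv_mul_le_iff₀ hlam1pos]
    calc enorm2 (x i) = enorm2 (R.mulVec (y i)) := by rw [hxy i]
      _ ≤ lam1 * enorm2 (y i) := hhigh (y i)
  set e := diagEquiv c hcne with he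
  -- the matrix factorization fact, coordinate form
  have hfact : ∀ v : Fin N → ℝ,
      Xmat.mulVec v = R.mulVec (Ymat.mulVec (fun i => c i * v i)) := by
    intro v; funext a
    have hxa : ∀ i, x i a = ∑ b, R a b * y i b := by
      intro i; rw [hxy i]; rfl
    simp only [Matrix.mulVec, dotProduct, Matrix.of_apply, Finset.mul_sum, hXmat, hYmat]
    rw [Finset.sum_comm]
    apply Finset.sum_congr rfl
    intro i _
    have h1 : (∑ b, R a b * (y i b / enorm2 (y i) * (c i * v i)))
        = (∑ b, R a b * y i b) * (c i * v i / enorm2 (y i)) := by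
      rw [Finset.sum_mul]; exact Finset.sum_congr rfl fun b _ => by ring
    rw [h1, ← hxa i, hc]
    have h2 := (hypos i).ne'
    have h3 := (hxpos i).ne'
    field_simp
  -- every Ymat · u lies in the range of R
  have hrange : ∀ u : Fin N → ℝ, ∃ w, Ymat.mulVec u = R.mulVec w := by
    intro u
    choose w0 hw0 using hyr
    refine ⟨fun b => ∑ i, u i / enorm2 (y i) * w0 i b, ?_⟩
    funext a
    simp only [Matrix.mulVec, dotProduct, Matrix.of_apply, Finset.mul_sum, hYmat]
    rw [Finset.sum_comm]
    apply Finset.sum_congr rfl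
    intro i _
    have hya : y i a = ∑ b, R a b * w0 i b := by rw [hw0 i]; rfl
    have h1 : (∑ b, R a b * (u i / enorm2 (y i) * w0 i b))
        = (∑ b, R a b * w0 i b) * (u i / enorm2 (y i)) := by
      rw [Finset.sum_mul]; exact Finset.sum_congr rfl fun b _ => by ring
    rw [h1, ← hya]
    ring
  -- vector-level factorization
  have hfactE : ∀ v : EuclideanSpace ℝ (Fin N),
      Matrix.toEuclideanLin Xmat v
        = Matrix.toEuclideanLin R (Matrix.toEuclideanLin Ymat (e v)) := by
    intro v; ext a
    rw [toEuclideanLin_coord, toEuclideanLin_coord]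
    have h1 : (fun b => (Matrix.toEuclideanLin Ymat (e v)) b)
        = Ymat.mulVec (fun i => c i * v i) := by
      funext b; rw [toEuclideanLin_coord]; rfl
    rw [h1, ← hfact (fun i => v i)]
  -- lower bound for R on the range of Ymat
  have hlowE : ∀ u : EuclideanSpace ℝ (Fin N),
      lamd * ‖Matrix.toEuclideanLin Ymat u‖
        ≤ ‖Matrix.toEuclideanLin R (Matrix.toEuclideanLin Ymat u)‖ := by
    intro u
    obtain ⟨w, hw⟩ := hrange (fun i => u i)
    rw [norm_toEuclideanLin, norm_toEuclideanLin]
    have h2 : (fun b => (Matrix.toEuclideanLin Ymat u) b)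
        = Ymat.mulVec (fun i => u i) := by
      funext b; rw [toEuclideanLin_coord]
    rw [h2, hw]
    exact hlow w
  -- lower bound for the diagonal scaling
  have heLow : ∀ v : EuclideanSpace ℝ (Fin N), lam1⁻¹ * ‖v‖ ≤ ‖e v‖ := by
    intro v
    rw [← enorm2_eq_norm v, ← enorm2_eq_norm (e v)]
    exact enorm2_scale (inv_pos.2 hlam1pos).le hclow (fun i => v i)
  -- main reduction
  suffices key : sigmaSV d Ymat ≤ (lam1 / lamd) * sigmaSV d Xmat by
    calc (lamd / lam1) * sigmaSV d Ymat
        ≤ (lamd / lam1) * ((lam1 / lamd) * sigmaSV d Xmat) :=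
          mul_le_mul_of_nonneg_left key (by positivity)
      _ = sigmaSV d Xmat := by field_simp
  refine Real.iSup_le (fun W => ?_) (mul_nonneg (by positivity) hXnn)
  -- the comparison subspace
  set W' : Submodule ℝ (EuclideanSpace ℝ (Fin N)) :=
    Submodule.map (e.symm : EuclideanSpace ℝ (Fin N) →ₗ[ℝ] EuclideanSpace ℝ (Fin N)) W.1
    with hW'def
  have hW'rank : Module.finrank ℝ W' = d := by
    rw [hW'def, LinearEquiv.finrank_map_eq]; exact W.2
  have hne' : Nonempty {v : EuclideanSpace ℝ (Fin N) // v ∈ W' ∧ ‖v‖ = 1} := by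
    obtain ⟨v, h1, h2⟩ := exists_unit_mem (ne_bot_of_finrank hd hW'rank)
    exact ⟨⟨v, h1, h2⟩⟩
  have step1 : (⨅ v : {v : EuclideanSpace ℝ (Fin N) // v ∈ W.1 ∧ ‖v‖ = 1},
        ‖Matrix.toEuclideanLin Ymat v.1‖)
      ≤ (lam1 / lamd) * ⨅ w : {v : EuclideanSpace ℝ (Fin N) // v ∈ W' ∧ ‖v‖ = 1},
        ‖Matrix.toEuclideanLin Xmat w.1‖ := by
    rw [Real.mul_iInf_of_nonneg (by positivity)]
    apply le_ciInf
    rintro ⟨w, hwW', hwn⟩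
    have huW : e w ∈ W.1 := by
      have := (Submodule.mem_map_equiv W.1).1 hwW'
      rwa [LinearEquiv.symm_symm] at this
    set u := e w with hu
    have hu0 : u ≠ 0 := by
      intro h
      have : w = 0 := by
        have := congrArg e.symm h
        rwa [hu, LinearEquiv.symm_apply_apply, map_zero] at this
      rw [this, norm_zero] at hwn
      exact one_ne_zero hwn.symm
    have hunpos : 0 < ‖u‖ := norm_pos_iff.2 hu0
    have hv0mem : ‖u‖⁻¹ • u ∈ W.1 := W.1.smul_mem _ huW
    have hv0norm : ‖(‖u‖⁻¹ • u)‖ = 1 := by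
      rw [norm_smul, norm_inv, norm_norm, inv_mul_cancel₀ hunpos.ne']
    apply ciInf_le_of_le (iInf_norm_bddBelow Ymat W.1) ⟨‖u‖⁻¹ • u, hv0mem, hv0norm⟩
    show ‖Matrix.toEuclideanLin Ymat (‖u‖⁻¹ • u)‖
        ≤ lam1 / lamd * ‖Matrix.toEuclideanLin Xmat w‖
    rw [_root_.map_smul, norm_smul, norm_inv, norm_norm]
    have h1 : lamd * ‖Matrix.toEuclideanLin Ymat u‖ ≤ ‖Matrix.toEuclideanLin Xmat w‖ := by
      rw [hfactE w]; exact hlowE u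
    have h2 : lam1⁻¹ ≤ ‖u‖ := by
      have := heLow w
      rwa [hwn, mul_one] at this
    have h3 : ‖u‖⁻¹ ≤ lam1 := by
      have := inv_anti₀ (inv_pos.2 hlam1pos) h2
      rwa [inv_inv] at this
    calc ‖u‖⁻¹ * ‖Matrix.toEuclideanLin Ymat u‖
        ≤ lam1 * ‖Matrix.toEuclideanLin Ymat u‖ :=
          mul_le_mul_of_nonneg_right h3 (norm_nonneg _)
      _ ≤ lam1 * (‖Matrix.toEuclideanLin Xmat w‖ / lamd) := by
          apply mul_le_mul_of_nonneg_left _ hlam1pos.le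
          rw [le_div_iff₀ hlamd]; linarith [h1]
      _ = lam1 / lamd * ‖Matrix.toEuclideanLin Xmat w‖ := by ring
  have step2 : (⨅ w : {v : EuclideanSpace ℝ (Fin N) // v ∈ W' ∧ ‖v‖ = 1},
        ‖Matrix.toEuclideanLin Xmat w.1‖) ≤ sigmaSV d Xmat :=
    iInf_le_sigmaSV hd Xmat W' hW'rank
  calc (⨅ v : {v : EuclideanSpace ℝ (Fin N) // v ∈ W.1 ∧ ‖v‖ = 1},
        ‖Matrix.toEuclideanLin Ymat v.1‖)
      ≤ (lam1 / lamd) * ⨅ w : {v : EuclideanSpace ℝ (Fin N) // v ∈ W' ∧ ‖v‖ = 1},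
        ‖Matrix.toEuclideanLin Xmat w.1‖ := step1
    _ ≤ (lam1 / lamd) * sigmaSV d Xmat := mul_le_mul_of_nonneg_left step2 (by positivity)
end

section
/- Let (a_k)_{k≥1} be a sequence in [0, γ] such that for every k, either (i) a_k ≥ γ/(2√k) and a_{k+1} ≤ a_k − C_3/k, or (ii) a_k < γ/(2√k) and a_{k+1} < γ/√k, where C_3, γ > 0 are constants. Then a_k = O(1/√k); i.e., there exists C such that a_k ≤ C/√k for all k. -/
/-- Key elementary inequality: if `(B/(2C₃))² ≤ k` then `B/√k − C₃/k ≤ B/√(k+1)`. -/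
lemma stmt19_aux (B C₃ : ℝ) (hB : 0 < B) (hC₃ : 0 < C₃) (k : ℕ) (hk : 1 ≤ k)
    (hkb : (B / (2 * C₃)) ^ 2 ≤ (k : ℝ)) :
    B / Real.sqrt k - C₃ / k ≤ B / Real.sqrt (k + 1) := by
  have hk0 : (0:ℝ) < k := by exact_mod_cast hk
  set s := Real.sqrt k with hs
  set t := Real.sqrt (k + 1) with ht
  have hs0 : 0 < s := Real.sqrt_pos.mpr hk0
  have ht0 : 0 < t := Real.sqrt_pos.mpr (by positivity)
  have hs2 : s ^ 2 = k := Real.sq_sqrt hk0.le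
  have ht2 : t ^ 2 = k + 1 := Real.sq_sqrt (by positivity)
  have hst : s ≤ t := Real.sqrt_le_sqrt (by linarith)
  have hBle : B ≤ 2 * C₃ * s := by
    have h1 : B / (2 * C₃) ≤ s := by
      have := Real.sqrt_le_sqrt hkb
      rwa [Real.sqrt_sq (by positivity)] at this
    calc B = 2 * C₃ * (B / (2 * C₃)) := by field_simp
    _ ≤ 2 * C₃ * s := mul_le_mul_of_nonneg_left h1 (by positivity)
  have hd : 2 * s * (t - s) ≤ 1 := by nlinarith
  rw [div_sub_div _ _ (ne_of_gt hs0) (ne_of_gt hk0), div_le_div_iff₀ (by positivity) ht0]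
  have h1 : B * s * (t - s) ≤ C₃ * s := by nlinarith
  have hks : (k:ℝ) = s * s := by nlinarith
  nlinarith [mul_le_mul_of_nonneg_left hst hC₃.le]

/-- case (ii) bound transfer: `γ/√k ≤ √2·γ/√(k+1)` for `k ≥ 1`. -/
lemma stmt19_aux2 (γ : ℝ) (hγ : 0 < γ) (k : ℕ) (hk : 1 ≤ k) :
    γ / Real.sqrt k ≤ Real.sqrt 2 * γ / Real.sqrt (k + 1) := by
  have hk0 : (0:ℝ) < k := by exact_mod_cast hk
  have hs0 : 0 < Real.sqrt k := Real.sqrt_pos.mpr hk0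
  have ht0 : 0 < Real.sqrt ((k:ℝ) + 1) := Real.sqrt_pos.mpr (by positivity)
  rw [div_le_div_iff₀ hs0 ht0]
  have hk1 : (1:ℝ) ≤ k := by exact_mod_cast hk
  have h1 : Real.sqrt ((k:ℝ) + 1) ≤ Real.sqrt 2 * Real.sqrt k := by
    rw [← Real.sqrt_mul (by norm_num) (k:ℝ)]
    apply Real.sqrt_le_sqrt
    linarith
  calc γ * Real.sqrt ((k:ℝ) + 1) ≤ γ * (Real.sqrt 2 * Real.sqrt k) :=
        mul_le_mul_of_nonneg_left h1 hγ.le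
  _ = Real.sqrt 2 * γ * Real.sqrt k := by ring

/-- if a sequence `a_k ∈ [0,γ]` satisfies, for every `k ≥ 1`, either
(i) `a_k ≥ γ/(2√k)` and `a_{k+1} ≤ a_k − C₃/k`, or (ii) `a_k < γ/(2√k)` and
`a_{k+1} < γ/√k`, then `a_k = O(1/√k)`: there is `C` with `a_k ≤ C/√k` for all `k ≥ 1`. -/
theorem stmt19 (a : ℕ → ℝ) (γ C₃ : ℝ) (hγ : 0 < γ) (hC₃ : 0 < C₃)
    (hrange : ∀ k : ℕ, 1 ≤ k → a k ∈ Set.Icc 0 γ)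
    (hstep : ∀ k : ℕ, 1 ≤ k →
      (γ / (2 * Real.sqrt k) ≤ a k ∧ a (k + 1) ≤ a k - C₃ / k) ∨
      (a k < γ / (2 * Real.sqrt k) ∧ a (k + 1) < γ / Real.sqrt k)) :
    ∃ C : ℝ, ∀ k : ℕ, 1 ≤ k → a k ≤ C / Real.sqrt k := by
  classical
  set B := Real.sqrt 2 * γ with hB
  have h20 : (0:ℝ) < Real.sqrt 2 := Real.sqrt_pos.mpr (by norm_num)
  have hB0 : 0 < B := by positivity
  set N : ℕ := max 1 ⌈(B / (2 * C₃)) ^ 2⌉₊ with hN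
  have hN1 : 1 ≤ N := le_max_left _ _
  have hNbig : (B / (2 * C₃)) ^ 2 ≤ (N : ℝ) := by
    calc (B / (2 * C₃)) ^ 2 ≤ (⌈(B / (2 * C₃)) ^ 2⌉₊ : ℝ) := Nat.le_ceil _
    _ ≤ (N : ℝ) := by exact_mod_cast le_max_right _ _
  -- Step 1: some m ≥ N falls in case (ii)
  have h2 : ∃ m, N ≤ m ∧ a m < γ / (2 * Real.sqrt m) := by
    by_contra hcon
    push_neg at hcon
    have hdec : ∀ m, N ≤ m → a (m + 1) ≤ a m - C₃ / m := by
      intro m hm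
      rcases hstep m (hN1.trans hm) with ⟨_, h⟩ | ⟨h, _⟩
      · exact h
      · exact absurd h (not_lt.mpr (hcon m hm))
    have hsum : ∀ j : ℕ, (∑ i ∈ Finset.range j, C₃ / ((N + i : ℕ) : ℝ)) ≤ γ := by
      intro j
      have key : (∑ i ∈ Finset.range j, C₃ / ((N + i : ℕ) : ℝ)) ≤ a N - a (N + j) := by
        induction j with
        | zero => simp
        | succ j ih =>
          rw [Finset.sum_range_succ]
          have := hdec (N + j) (Nat.le_add_right N j)
          have hcast : ((N + j : ℕ) : ℝ) = (N : ℝ) + j := by push_cast; ring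
          have : a (N + j + 1) ≤ a (N + j) - C₃ / ((N + j : ℕ) : ℝ) := this
          have hNj1 : N + (j + 1) = N + j + 1 := rfl
          rw [hNj1]
          linarith
      have h0 : 0 ≤ a (N + j) := (hrange (N + j) (le_trans hN1 (Nat.le_add_right N j))).1
      have h1 : a N ≤ γ := (hrange N hN1).2
      linarith
    have hsummable : Summable (fun i : ℕ => C₃ / ((N + i : ℕ) : ℝ)) := by
      apply summable_of_sum_range_le (c := γ)
      · intro n; positivity
      · exact hsum
    have hsummable' : Summable (fun i : ℕ => C₃ / ((i : ℕ) : ℝ)) := by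
      have : (fun i : ℕ => C₃ / ((N + i : ℕ) : ℝ)) =
          (fun i : ℕ => C₃ / ((i + N : ℕ) : ℝ)) := by
        funext i; rw [Nat.add_comm]
      rw [this] at hsummable
      exact (summable_nat_add_iff (f := fun i : ℕ => C₃ / ((i : ℕ) : ℝ)) N).mp hsummable
    have : Summable (fun i : ℕ => 1 / (i : ℝ)) := by
      have h := hsummable'.mul_left C₃⁻¹
      apply h.congr
      intro i
      field_simp
    exact Real.not_summable_one_div_natCast this
  obtain ⟨m, hmN, hmlt⟩ := h2
  have hm1 : 1 ≤ m := hN1.trans hmN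
  -- Step 2: a (m+1) ≤ B / √(m+1), then induction for all k ≥ m+1
  have hbase : a (m + 1) ≤ B / Real.sqrt (m + 1) := by
    rcases hstep m hm1 with ⟨h, _⟩ | ⟨_, h⟩
    · exact absurd hmlt (not_lt.mpr h)
    · calc a (m + 1) ≤ γ / Real.sqrt m := h.le
      _ ≤ B / Real.sqrt (m + 1) := by
          have := stmt19_aux2 γ hγ m hm1
          push_cast at this ⊢
          exact this
  have hind : ∀ k, m + 1 ≤ k → a k ≤ B / Real.sqrt k := by
    intro k hk
    induction k, hk using Nat.le_induction with
    | base => exact_mod_cast hbase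
    | succ k hk ih =>
      push_cast
      have hk1 : 1 ≤ k := le_trans (Nat.le_add_left 1 m) hk
      have hkN : (B / (2 * C₃)) ^ 2 ≤ (k : ℝ) := by
        calc (B / (2 * C₃)) ^ 2 ≤ (N : ℝ) := hNbig
        _ ≤ (k : ℝ) := by exact_mod_cast le_trans hmN (by omega)
      rcases hstep k hk1 with ⟨_, h⟩ | ⟨_, h⟩
      · calc a (k + 1) ≤ a k - C₃ / k := h
        _ ≤ B / Real.sqrt k - C₃ / k := by linarith
        _ ≤ B / Real.sqrt ((k:ℝ) + 1) := stmt19_aux B C₃ hB0 hC₃ k hk1 hkN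
      · calc a (k + 1) ≤ γ / Real.sqrt k := h.le
        _ ≤ B / Real.sqrt ((k:ℝ) + 1) := stmt19_aux2 γ hγ k hk1
  -- Step 3: pad the constant for k ≤ m
  refine ⟨max B (γ * Real.sqrt (m + 1)), fun k hk => ?_⟩
  have hk0 : (0:ℝ) < k := by exact_mod_cast hk
  have hs0 : 0 < Real.sqrt k := Real.sqrt_pos.mpr hk0
  rcases le_or_gt (m + 1) k with hkm | hkm
  · refine (hind k hkm).trans ?_
    gcongr
    exact le_max_left _ _
  · rw [le_div_iff₀ hs0]
    have h1 : a k ≤ γ := (hrange k hk).2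
    have h2 : Real.sqrt (k:ℝ) ≤ Real.sqrt ((m:ℝ) + 1) := by
      apply Real.sqrt_le_sqrt
      exact_mod_cast (by omega : k ≤ m + 1)
    have h3 : a k * Real.sqrt k ≤ γ * Real.sqrt ((m:ℝ) + 1) :=
      mul_le_mul h1 h2 (Real.sqrt_nonneg _) hγ.le
    exact h3.trans (le_max_right _ _)
end
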